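/- Let 2 ≤ p < 3, let f : R^n → R^n be of class C³_b, and let x, x̃ be two time series in R^n. Define T_{k,l} := f(x_l) − f(x_k) − Df(x_k)(x_l − x_k) and T̃_{k,l} := f(x̃_l) − f(x̃_k) − Df(x̃_k)(x̃_l − x̃_k). Then ||T − T̃||_{p/2;[k,l]} ≤ 2^{(p−2)/p} ||f||_{C³_b} [ ||x − x̃||^{p/2}_{p;[k,l]} ( ||x||^p_{p;[k,l]} + ||x̃||^p_{p;[k,l]} )^{1/2} + ||x̃||^p_{p;[k,l]} ||x − x̃||^{p/2}_{∞;[0,l]} ]^{2/p}, where ||y||_{∞;[0,l]} := max_{j=0,...,l} |y_j|. -/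

import Mathlib

noncomputable section

/-- `s` is an increasing subsequence (partition) of `{k, …, l}` from `k` to `l`. -/
def IsPart (k l : ℕ) (s : List ℕ) : Prop :=
  s.Chain' (· < ·) ∧ s.head? = some k ∧ s.getLast? = some l

/-- Supremum over partitions of the sums of `p`-th powers of increments of a triangular array. -/
def pVarSum {E : Type*} [NormedAddCommGroup E] (p : ℝ) (Ξ : ℕ → ℕ → E) (k l : ℕ) : ℝ :=
  sSup { x : ℝ | ∃ s : List ℕ, IsPart k l s ∧
    x = ((s.zip s.tail).map fun ab => ‖Ξ ab.1 ab.2‖ ^ p).sum }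

/-- The `p`-variation of a triangular array over `[k,l]`. -/
def pVar {E : Type*} [NormedAddCommGroup E] (p : ℝ) (Ξ : ℕ → ℕ → E) (k l : ℕ) : ℝ :=
  pVarSum p Ξ k l ^ (1 / p)

/-- The `p`-variation of a time series over `[k,l]`. -/
def pVarSeq {E : Type*} [NormedAddCommGroup E] (p : ℝ) (x : ℕ → E) (k l : ℕ) : ℝ :=
  pVar p (fun a b => x b - x a) k l

/-- A discrete control on `{0, …, N}`: nonnegative, vanishing on the diagonal, superadditive. -/
def IsControl (N : ℕ) (ω : ℕ → ℕ → ℝ) : Prop :=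
  (∀ k l, k ≤ l → l ≤ N → 0 ≤ ω k l) ∧
  (∀ k, k ≤ N → ω k k = 0) ∧
  (∀ k l m, k < l → l < m → m ≤ N → ω k l + ω l m ≤ ω k m)

/-- The `C³_b` norm of a map: the maximum of the sup norms of its first, second and
third derivatives. -/
def C3bNorm {E F : Type*} [NormedAddCommGroup E] [NormedSpace ℝ E]
    [NormedAddCommGroup F] [NormedSpace ℝ F] (f : E → F) : ℝ :=
  max (⨆ y, ‖iteratedFDeriv ℝ 1 f y‖)
    (max (⨆ y, ‖iteratedFDeriv ℝ 2 f y‖) (⨆ y, ‖iteratedFDeriv ℝ 3 f y‖))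

section Analysis
variable {E F : Type*} [NormedAddCommGroup E] [NormedSpace ℝ E]
  [NormedAddCommGroup F] [NormedSpace ℝ F] [CompleteSpace F]

lemma taylor_integral (f : E → F) (hf : ContDiff ℝ 3 f) (c v : E) :
    f (c + v) - f c - fderiv ℝ f c v
      = ∫ t in (0:ℝ)..1, (1 - t) • (fderiv ℝ (fderiv ℝ f) (c + t • v) v) v := by
  have hdf : ContDiff ℝ 2 (fderiv ℝ f) := hf.fderiv_right (by norm_num)
  have hd2 : ContDiff ℝ 1 (fderiv ℝ (fderiv ℝ f)) := hdf.fderiv_right (by norm_num)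
  have key : ∀ t : ℝ, HasDerivAt
      (fun t : ℝ => f (c + t • v) + (1 - t) • fderiv ℝ f (c + t • v) v)
      ((1 - t) • (fderiv ℝ (fderiv ℝ f) (c + t • v) v) v) t := by
    intro t
    have hline : HasDerivAt (fun t : ℝ => c + t • v) v t := by
      simpa using ((hasDerivAt_id t).smul_const v).const_add c
    have h1 : HasDerivAt (fun t : ℝ => f (c + t • v)) (fderiv ℝ f (c + t • v) v) t :=
      (hf.differentiable (by norm_num) (c + t • v)).hasFDerivAt.comp_hasDerivAt t hline
    have h2 : HasDerivAt (fun t : ℝ => fderiv ℝ f (c + t • v))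
        (fderiv ℝ (fderiv ℝ f) (c + t • v) v) t :=
      (hdf.differentiable (by norm_num) (c + t • v)).hasFDerivAt.comp_hasDerivAt t hline
    have h3 : HasDerivAt (fun t : ℝ => fderiv ℝ f (c + t • v) v)
        (fderiv ℝ (fderiv ℝ f) (c + t • v) v v) t := by
      simpa using h2.clm_apply (hasDerivAt_const t v)
    have h4 : HasDerivAt (fun t : ℝ => (1 : ℝ) - t) (-1) t := by
      simpa using (hasDerivAt_id t).const_sub (1:ℝ)
    have h5 := h4.smul h3
    have h6 := h1.add h5
    convert h6 using 1
    · rfl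
    simp only [neg_smul, one_smul]
    abel
  have hcont : Continuous fun t : ℝ => (1 - t) • (fderiv ℝ (fderiv ℝ f) (c + t • v) v) v := by
    have hlc : Continuous fun t : ℝ => c + t • v := by continuity
    have hD2 : Continuous fun t : ℝ => fderiv ℝ (fderiv ℝ f) (c + t • v) :=
      (hd2.continuous).comp hlc
    exact (continuous_const.sub continuous_id).smul
      ((hD2.clm_apply continuous_const).clm_apply continuous_const)
  have hint : IntervalIntegrable _ MeasureTheory.volume (0:ℝ) 1 := hcont.intervalIntegrable 0 1
  rw [intervalIntegral.integral_eq_sub_of_hasDerivAt (fun t _ => key t) hint]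
  simp only [one_smul, zero_smul, sub_self, smul_eq_mul]
  norm_num
  abel

lemma remainder_diff_norm_le (f : E → F) (hf : ContDiff ℝ 3 f) {C M : ℝ}
    (hC2 : ∀ y, ‖fderiv ℝ (fderiv ℝ f) y‖ ≤ C)
    (hC3 : ∀ y y', ‖fderiv ℝ (fderiv ℝ f) y - fderiv ℝ (fderiv ℝ f) y'‖ ≤ C * ‖y - y'‖)
    (ca cb c'a c'b : E) (hM0 : 0 ≤ M) (hMa : ‖ca - c'a‖ ≤ M) (hMb : ‖cb - c'b‖ ≤ M) :
    ‖(f cb - f ca - fderiv ℝ f ca (cb - ca)) - (f c'b - f c'a - fderiv ℝ f c'a (c'b - c'a))‖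
      ≤ C / 2 * ((‖cb - ca‖ + ‖c'b - c'a‖) * ‖(cb - ca) - (c'b - c'a)‖ + M * ‖c'b - c'a‖ ^ 2) := by
  have hC0 : 0 ≤ C := le_trans (norm_nonneg (fderiv ℝ (fderiv ℝ f) ca)) (hC2 ca)
  set D2 := fun y => fderiv ℝ (fderiv ℝ f) y with hD2def
  set v : E := cb - ca with hv
  set v' : E := c'b - c'a with hv'
  set K : ℝ := C * ((‖v‖ + ‖v'‖) * ‖v - v'‖ + M * ‖v'‖ ^ 2) with hK
  have hKnn : 0 ≤ K := by positivity
  have hdf : ContDiff ℝ 2 (fderiv ℝ f) := hf.fderiv_right (by norm_num)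
  have hd2 : ContDiff ℝ 1 (fderiv ℝ (fderiv ℝ f)) := hdf.fderiv_right (by norm_num)
  have hcont : ∀ c v : E, Continuous fun t : ℝ => (1 - t) • (D2 (c + t • v) v) v := by
    intro c v
    have hlc : Continuous fun t : ℝ => c + t • v := by continuity
    exact (continuous_const.sub continuous_id).smul
      ((((hd2.continuous).comp hlc).clm_apply continuous_const).clm_apply continuous_const)
  have hint1 : IntervalIntegrable (fun t : ℝ => (1 - t) • (D2 (ca + t • v) v) v)
      MeasureTheory.volume (0:ℝ) 1 := (hcont ca v).intervalIntegrable 0 1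
  have hint2 : IntervalIntegrable (fun t : ℝ => (1 - t) • (D2 (c'a + t • v') v') v')
      MeasureTheory.volume (0:ℝ) 1 := (hcont c'a v').intervalIntegrable 0 1
  have e1 : f cb - f ca - fderiv ℝ f ca v
      = ∫ t in (0:ℝ)..1, (1 - t) • (D2 (ca + t • v) v) v := by
    have h := taylor_integral f hf ca v
    have hc : ca + v = cb := by rw [hv]; abel
    rwa [hc] at h
  have e2 : f c'b - f c'a - fderiv ℝ f c'a v'
      = ∫ t in (0:ℝ)..1, (1 - t) • (D2 (c'a + t • v') v') v' := by
    have h := taylor_integral f hf c'a v'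
    have hc : c'a + v' = c'b := by rw [hv']; abel
    rwa [hc] at h
  rw [e1, e2, ← intervalIntegral.integral_sub hint1 hint2]
  have hpt : ∀ t ∈ Set.uIoc (0:ℝ) 1,
      ‖(1 - t) • (D2 (ca + t • v) v) v - (1 - t) • (D2 (c'a + t • v') v') v'‖
        ≤ (1 - t) * K := by
    intro t ht
    rw [Set.uIoc_of_le (by norm_num : (0:ℝ) ≤ 1)] at ht
    obtain ⟨ht0, ht1⟩ := ht
    set ξ := ca + t • v with hξ
    set ξ' := c'a + t • v' with hξ'
    have hsplit : (D2 ξ v) v - (D2 ξ' v') v'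
        = (D2 ξ (v - v')) v + ((D2 ξ v') (v - v') + ((D2 ξ - D2 ξ') v') v') := by
      simp only [map_sub, ContinuousLinearMap.sub_apply]
      abel
    have hxi : ‖ξ - ξ'‖ ≤ M := by
      have hrw : ξ - ξ' = (1 - t) • (ca - c'a) + t • (cb - c'b) := by
        rw [hξ, hξ', hv, hv']; module
      rw [hrw]
      calc ‖(1 - t) • (ca - c'a) + t • (cb - c'b)‖
          ≤ ‖(1 - t) • (ca - c'a)‖ + ‖t • (cb - c'b)‖ := norm_add_le _ _
        _ = (1 - t) * ‖ca - c'a‖ + t * ‖cb - c'b‖ := by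
            rw [norm_smul, norm_smul, Real.norm_eq_abs, Real.norm_eq_abs,
              abs_of_nonneg (by linarith), abs_of_nonneg (by linarith)]
        _ ≤ (1 - t) * M + t * M := by
            have h1 : (0:ℝ) ≤ 1 - t := by linarith
            have h2 : (0:ℝ) ≤ t := le_of_lt ht0
            exact add_le_add (mul_le_mul_of_nonneg_left hMa h1)
              (mul_le_mul_of_nonneg_left hMb h2)
        _ = M := by ring
    have hterm : ‖(D2 ξ v) v - (D2 ξ' v') v'‖ ≤ K := by
      rw [hsplit]
      have b1 : ‖(D2 ξ (v - v')) v‖ ≤ C * ‖v - v'‖ * ‖v‖ := by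
        refine le_trans ((D2 ξ).le_opNorm₂ _ _) ?_
        gcongr
        exact hC2 ξ
      have b2 : ‖(D2 ξ v') (v - v')‖ ≤ C * ‖v'‖ * ‖v - v'‖ := by
        refine le_trans ((D2 ξ).le_opNorm₂ _ _) ?_
        gcongr
        exact hC2 ξ
      have b3 : ‖((D2 ξ - D2 ξ') v') v'‖ ≤ C * M * (‖v'‖ * ‖v'‖) := by
        refine le_trans ((D2 ξ - D2 ξ').le_opNorm₂ _ _) ?_
        have := hC3 ξ ξ'
        have h4 : ‖D2 ξ - D2 ξ'‖ ≤ C * M := le_trans this (by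
          exact mul_le_mul_of_nonneg_left hxi hC0)
        calc ‖D2 ξ - D2 ξ'‖ * ‖v'‖ * ‖v'‖ ≤ C * M * ‖v'‖ * ‖v'‖ := by gcongr
          _ = C * M * (‖v'‖ * ‖v'‖) := by ring
      calc ‖(D2 ξ (v - v')) v + ((D2 ξ v') (v - v') + ((D2 ξ - D2 ξ') v') v')‖
          ≤ ‖(D2 ξ (v - v')) v‖ + (‖(D2 ξ v') (v - v')‖ + ‖((D2 ξ - D2 ξ') v') v'‖) :=
            le_trans (norm_add_le _ _) (by gcongr; exact norm_add_le _ _)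
        _ ≤ C * ‖v - v'‖ * ‖v‖ + (C * ‖v'‖ * ‖v - v'‖ + C * M * (‖v'‖ * ‖v'‖)) := by
            gcongr
        _ = K := by rw [hK]; ring
    calc ‖(1 - t) • (D2 ξ v) v - (1 - t) • (D2 ξ' v') v'‖
        = (1 - t) * ‖(D2 ξ v) v - (D2 ξ' v') v'‖ := by
          rw [← smul_sub, norm_smul, Real.norm_eq_abs, abs_of_nonneg (by linarith)]
      _ ≤ (1 - t) * K := mul_le_mul_of_nonneg_left hterm (by linarith)
  have hgint : IntervalIntegrable (fun t : ℝ => (1 - t) * K) MeasureTheory.volume (0:ℝ) 1 :=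
    (Continuous.mul (continuous_const.sub continuous_id) continuous_const).intervalIntegrable 0 1
  have hnorm := intervalIntegral.norm_integral_le_of_norm_le (by norm_num : (0:ℝ) ≤ 1)
    (Filter.Eventually.of_forall (fun t ht => hpt t (by rw [Set.uIoc_of_le (by norm_num : (0:ℝ) ≤ 1)]; exact ht))) hgint
  refine le_trans hnorm ?_
  have hval : (∫ t in (0:ℝ)..1, (1 - t) * K) = K / 2 := by
    rw [intervalIntegral.integral_mul_const]
    have h12 : (∫ t in (0:ℝ)..1, (1 - t)) = 1 / 2 := by
      have h := intervalIntegral.integral_comp_sub_left (a := (0:ℝ)) (b := 1) (fun t : ℝ => t) 1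
      simp [integral_id] at h
      rw [show (fun t : ℝ => 1 - t) = (fun t : ℝ => t) ∘ (fun t : ℝ => 1 - t) from rfl] at h ⊢
      rw [h]
      norm_num
    rw [h12]; ring
  rw [hval]
  rw [hK]; ring_nf
  apply le_of_eq
  ring
end Analysis

lemma le_getLast_of_chain' : ∀ (s : List ℕ) (_ : s.Chain' (· < ·)) (l : ℕ)
    (_ : s.getLast? = some l) (a : ℕ) (_ : a ∈ s), a ≤ l
  | [], _, l, h, a, ha => by simp at ha
  | [b], _, l, h, a, ha => by
      simp at h ha; omega
  | b :: c :: u, hc, l, h, a, ha => by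
      rw [List.getLast?_cons_cons] at h
      have hc' : (c :: u).Chain' (· < ·) := hc.tail
      have hbc : b < c := List.isChain_cons_cons.mp hc |>.1
      rcases List.mem_cons.mp ha with rfl | ha'
      · have := le_getLast_of_chain' (c :: u) hc' l h c (by simp)
        omega
      · exact le_getLast_of_chain' (c :: u) hc' l h a ha'

lemma mem_bounds_of_isPart {k l : ℕ} {s : List ℕ} (h : IsPart k l s) :
    ∀ a ∈ s, k ≤ a ∧ a ≤ l := by
  obtain ⟨hc, hh, hl⟩ := h
  intro a ha
  constructor
  · cases s with
    | nil => simp at ha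
    | cons b t =>
      simp at hh
      subst hh
      rcases List.mem_cons.mp ha with rfl | ha'
      · exact le_rfl
      · have := (List.isChain_iff_pairwise.mp hc)
        exact le_of_lt ((List.pairwise_cons.mp this).1 a ha')
  · exact le_getLast_of_chain' s hc l hl a ha

lemma zip_tail_nodup : ∀ (s : List ℕ) (_ : s.Chain' (· < ·)), (s.zip s.tail).Nodup
  | [], _ => by simp
  | [a], _ => by simp
  | a :: b :: u, hc => by
      have hc' : (b :: u).Chain' (· < ·) := hc.tail
      have ih := zip_tail_nodup (b :: u) hc'
      have hpw := List.isChain_iff_pairwise.mp hc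
      rw [show (a :: b :: u).tail = b :: u from rfl, List.zip_cons_cons]
      refine List.nodup_cons.mpr ⟨?_, ih⟩
      intro hmem
      have h1 : a ∈ b :: u := (List.of_mem_zip hmem).1
      have := (List.pairwise_cons.mp hpw).1 a h1
      omega

lemma pVarSum_nonneg {E : Type*} [NormedAddCommGroup E] (p : ℝ) (Ξ : ℕ → ℕ → E) (k l : ℕ) :
    0 ≤ pVarSum p Ξ k l := by
  apply Real.sSup_nonneg
  rintro x ⟨s, hs, rfl⟩
  apply List.sum_nonneg
  intro a ha
  obtain ⟨ab, _, rfl⟩ := List.mem_map.mp ha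
  positivity

lemma bddAbove_pVarSumSet {E : Type*} [NormedAddCommGroup E] (p : ℝ) (Ξ : ℕ → ℕ → E)
    (k l : ℕ) : BddAbove { x : ℝ | ∃ s : List ℕ, IsPart k l s ∧
      x = ((s.zip s.tail).map fun ab => ‖Ξ ab.1 ab.2‖ ^ p).sum } := by
  refine ⟨∑ ab ∈ Finset.Icc k l ×ˢ Finset.Icc k l, ‖Ξ ab.1 ab.2‖ ^ p, ?_⟩
  rintro x ⟨s, hs, rfl⟩
  have hnd := zip_tail_nodup s hs.1
  rw [← List.sum_toFinset _ hnd]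
  apply Finset.sum_le_sum_of_subset_of_nonneg
  · intro ab hab
    rw [List.mem_toFinset] at hab
    have h1 := (List.of_mem_zip hab).1
    have h2 := List.mem_of_mem_tail (List.of_mem_zip hab).2
    have b1 := mem_bounds_of_isPart hs _ h1
    have b2 := mem_bounds_of_isPart hs _ h2
    simp [Finset.mem_Icc, b1.1, b1.2, b2.1, b2.2]
  · intro ab _ _
    positivity

lemma partSum_le_pVarSum {E : Type*} [NormedAddCommGroup E] (p : ℝ) (Ξ : ℕ → ℕ → E)
    {k l : ℕ} {s : List ℕ} (hs : IsPart k l s) :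
    ((s.zip s.tail).map fun ab => ‖Ξ ab.1 ab.2‖ ^ p).sum ≤ pVarSum p Ξ k l :=
  le_csSup (bddAbove_pVarSumSet p Ξ k l) ⟨s, hs, rfl⟩

lemma rpow_add_le_two_rpow_mul {q : ℝ} (hq : 1 ≤ q) {a b : ℝ} (ha : 0 ≤ a) (hb : 0 ≤ b) :
    (a + b) ^ q ≤ 2 ^ (q - 1) * (a ^ q + b ^ q) := by
  have hconv := (convexOn_rpow hq).2 (Set.mem_Ici.mpr ha) (Set.mem_Ici.mpr hb)
    (by norm_num : (0:ℝ) ≤ 1/2) (by norm_num : (0:ℝ) ≤ 1/2) (by norm_num)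
  simp only [smul_eq_mul] at hconv
  have key : ((a + b)/2) ^ q ≤ (a ^ q + b ^ q)/2 := by
    calc ((a + b)/2) ^ q = (1/2 * a + 1/2 * b) ^ q := by ring_nf
      _ ≤ 1/2 * a ^ q + 1/2 * b ^ q := hconv
      _ = (a ^ q + b ^ q)/2 := by ring
  have h2 : (a + b) ^ q = 2 ^ q * ((a + b)/2) ^ q := by
    rw [← Real.mul_rpow (by norm_num) (by positivity)]
    ring_nf
  rw [h2, Real.rpow_sub (by norm_num : (0:ℝ) < 2), Real.rpow_one]
  calc 2 ^ q * ((a + b)/2) ^ q ≤ 2 ^ q * ((a ^ q + b ^ q)/2) := by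
        apply mul_le_mul_of_nonneg_left key (by positivity)
    _ = 2 ^ q / 2 * (a ^ q + b ^ q) := by ring

lemma lip_of_iteratedFDeriv_one {E G : Type*} [NormedAddCommGroup E] [NormedSpace ℝ E]
    [NormedAddCommGroup G] [NormedSpace ℝ G] (g : E → G) (hg : ContDiff ℝ 1 g) {C : ℝ}
    (hC : ∀ y, ‖iteratedFDeriv ℝ 1 g y‖ ≤ C) (y y' : E) : ‖g y - g y'‖ ≤ C * ‖y - y'‖ :=
  Convex.norm_image_sub_le_of_norm_fderiv_le
    (fun u _ => (hg.differentiable (by norm_num) u))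
    (fun u _ => by
      have h := hC u
      rwa [norm_iteratedFDeriv_one] at h)
    convex_univ trivial trivial

set_option maxHeartbeats 1600000 in
/-- `p/2`-variation bound for the difference of the first-order Taylor remainders of a
`C³_b` function along two time series. -/
theorem pvar_taylor_remainder_diff_bound (n N : ℕ) (p : ℝ) (hp1 : 2 ≤ p) (hp2 : p < 3)
    (f : (Fin n → ℝ) → (Fin n → ℝ)) (hf : ContDiff ℝ 3 f)
    (hfb : ∀ j : ℕ, j ≤ 3 → ∃ C : ℝ, ∀ y, ‖iteratedFDeriv ℝ j f y‖ ≤ C)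
    (x x' : ℕ → Fin n → ℝ)
    (T T' : ℕ → ℕ → Fin n → ℝ)
    (hT : ∀ k l, T k l = f (x l) - f (x k) - fderiv ℝ f (x k) (x l - x k))
    (hT' : ∀ k l, T' k l = f (x' l) - f (x' k) - fderiv ℝ f (x' k) (x' l - x' k)) :
    ∀ k l : ℕ, k ≤ l → l ≤ N →
      pVar (p / 2) (fun a b => T a b - T' a b) k l ≤
        2 ^ ((p - 2) / p) * C3bNorm f *
          (pVarSeq p (fun j => x j - x' j) k l ^ (p / 2) *
              (pVarSeq p x k l ^ p + pVarSeq p x' k l ^ p) ^ ((1 : ℝ) / 2) +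
            pVarSeq p x' k l ^ p *
              ((Finset.Icc 0 l).sup' ⟨0, by simp⟩ fun j => ‖x j - x' j‖) ^ (p / 2)) ^ (2 / p) := by
  intro k l hkl hlN
  have hp0 : (0:ℝ) < p := by linarith
  have hq1 : (1:ℝ) ≤ p / 2 := by linarith
  have hq0 : (0:ℝ) < p / 2 := by linarith
  set C := C3bNorm f with hCdef
  set z : ℕ → Fin n → ℝ := fun j => x j - x' j with hzdef
  set M : ℝ := ((Finset.Icc 0 l).sup' ⟨0, by simp⟩ fun j => ‖x j - x' j‖) with hMdef
  have hMz : ∀ j, j ≤ l → ‖x j - x' j‖ ≤ M := by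
    intro j hj
    rw [hMdef]
    exact Finset.le_sup' (fun j => ‖x j - x' j‖) (Finset.mem_Icc.mpr ⟨Nat.zero_le _, hj⟩)
  have hM0 : (0:ℝ) ≤ M := le_trans (norm_nonneg (x 0 - x' 0)) (hMz 0 (Nat.zero_le l))
  -- derivative bounds
  have hdf : ContDiff ℝ 2 (fderiv ℝ f) := hf.fderiv_right (by norm_num)
  have hd2 : ContDiff ℝ 1 (fderiv ℝ (fderiv ℝ f)) := hdf.fderiv_right (by norm_num)
  have hsup : ∀ j : ℕ, j ≤ 3 → ∀ y, ‖iteratedFDeriv ℝ j f y‖ ≤ ⨆ y, ‖iteratedFDeriv ℝ j f y‖ := by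
    intro j hj y
    obtain ⟨Cj, hCj⟩ := hfb j hj
    exact le_ciSup ⟨Cj, by rintro _ ⟨y', rfl⟩; exact hCj y'⟩ y
  have hn2 : ∀ y, ‖fderiv ℝ (fderiv ℝ f) y‖ = ‖iteratedFDeriv ℝ 2 f y‖ := by
    intro y
    calc ‖fderiv ℝ (fderiv ℝ f) y‖
        = ‖iteratedFDeriv ℝ 0 (fderiv ℝ (fderiv ℝ f)) y‖ :=
          (norm_iteratedFDeriv_zero (f := fderiv ℝ (fderiv ℝ f)) (x := y)).symm
      _ = ‖iteratedFDeriv ℝ (0+1) (fderiv ℝ f) y‖ := norm_iteratedFDeriv_fderiv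
      _ = ‖iteratedFDeriv ℝ (1+1) f y‖ := norm_iteratedFDeriv_fderiv
      _ = ‖iteratedFDeriv ℝ 2 f y‖ := by norm_num
  have hn3 : ∀ y, ‖iteratedFDeriv ℝ 1 (fderiv ℝ (fderiv ℝ f)) y‖ = ‖iteratedFDeriv ℝ 3 f y‖ := by
    intro y
    calc ‖iteratedFDeriv ℝ 1 (fderiv ℝ (fderiv ℝ f)) y‖
        = ‖iteratedFDeriv ℝ (1+1) (fderiv ℝ f) y‖ := norm_iteratedFDeriv_fderiv
      _ = ‖iteratedFDeriv ℝ (2+1) f y‖ := norm_iteratedFDeriv_fderiv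
      _ = ‖iteratedFDeriv ℝ 3 f y‖ := by norm_num
  have hC2 : ∀ y, ‖fderiv ℝ (fderiv ℝ f) y‖ ≤ C := by
    intro y
    rw [hn2 y, hCdef, C3bNorm]
    exact le_trans (hsup 2 (by norm_num) y)
      (le_trans (le_max_left _ _) (le_max_right _ _))
  have hC3sup : ∀ y, ‖iteratedFDeriv ℝ 1 (fderiv ℝ (fderiv ℝ f)) y‖ ≤ C := by
    intro y
    rw [hn3 y, hCdef, C3bNorm]
    exact le_trans (hsup 3 (by norm_num) y)
      (le_trans (le_max_right _ _) (le_max_right _ _))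
  have hC0 : (0:ℝ) ≤ C := le_trans (norm_nonneg (fderiv ℝ (fderiv ℝ f) 0)) (hC2 0)
  have hC3 : ∀ y y', ‖fderiv ℝ (fderiv ℝ f) y - fderiv ℝ (fderiv ℝ f) y'‖ ≤ C * ‖y - y'‖ := by
    intro y y'
    exact lip_of_iteratedFDeriv_one _ hd2 hC3sup y y'
  -- pVarSum quantities
  set Z := pVarSum p (fun a b => z b - z a) k l with hZdef
  set X := pVarSum p (fun a b => x b - x a) k l with hXdef
  set X' := pVarSum p (fun a b => x' b - x' a) k l with hX'def
  have hZ0 : 0 ≤ Z := pVarSum_nonneg _ _ _ _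
  have hX0 : 0 ≤ X := pVarSum_nonneg _ _ _ _
  have hX'0 : 0 ≤ X' := pVarSum_nonneg _ _ _ _
  have hZr : pVarSeq p z k l ^ (p/2) = Z ^ ((1:ℝ)/2) := by
    rw [pVarSeq, pVar, ← hZdef, ← Real.rpow_mul hZ0]
    congr 1
    field_simp
  have hXr : pVarSeq p x k l ^ p = X := by
    rw [pVarSeq, pVar, ← hXdef, ← Real.rpow_mul hX0, one_div,
      inv_mul_cancel₀ (ne_of_gt hp0), Real.rpow_one]
  have hX'r : pVarSeq p x' k l ^ p = X' := by
    rw [pVarSeq, pVar, ← hX'def, ← Real.rpow_mul hX'0, one_div,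
      inv_mul_cancel₀ (ne_of_gt hp0), Real.rpow_one]
  rw [pVar, hZr, hXr, hX'r]
  set Br := Z ^ ((1:ℝ)/2) * (X + X') ^ ((1:ℝ)/2) + X' * M ^ (p/2) with hBrdef
  have hT1nn : 0 ≤ Z ^ ((1:ℝ)/2) * (X + X') ^ ((1:ℝ)/2) :=
    mul_nonneg (Real.rpow_nonneg hZ0 _) (Real.rpow_nonneg (by linarith) _)
  have hT2nn : 0 ≤ X' * M ^ (p/2) := mul_nonneg hX'0 (Real.rpow_nonneg hM0 _)
  have hBr0 : 0 ≤ Br := add_nonneg hT1nn hT2nn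
  -- the key bound on the (p/2)-variation sum
  have hS : pVarSum (p/2) (fun a b => T a b - T' a b) k l
      ≤ 2 ^ (p/2 - 1) * C ^ (p/2) * Br := by
    have hRnn : (0:ℝ) ≤ 2 ^ (p/2 - 1) * C ^ (p/2) * Br :=
      mul_nonneg (mul_nonneg (Real.rpow_nonneg (by norm_num) _)
        (Real.rpow_nonneg hC0 _)) hBr0
    rw [pVarSum]
    apply Real.sSup_le _ hRnn
    rintro val ⟨s, hs, rfl⟩
    have hnd : (s.zip s.tail).Nodup := zip_tail_nodup s hs.1
    rw [← List.sum_toFinset _ hnd]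
    set P := (s.zip s.tail).toFinset with hPdef
    have hmem : ∀ ab ∈ P, ab.1 ≤ l ∧ ab.2 ≤ l := by
      intro ab hab
      rw [hPdef, List.mem_toFinset] at hab
      have h1 := (List.of_mem_zip hab).1
      have h2 := List.mem_of_mem_tail (List.of_mem_zip hab).2
      exact ⟨(mem_bounds_of_isPart hs _ h1).2, (mem_bounds_of_isPart hs _ h2).2⟩
    have hpt : ∀ ab ∈ P, ‖T ab.1 ab.2 - T' ab.1 ab.2‖
        ≤ C/2 * ((‖x ab.2 - x ab.1‖ + ‖x' ab.2 - x' ab.1‖) * ‖z ab.2 - z ab.1‖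
            + M * ‖x' ab.2 - x' ab.1‖ ^ 2) := by
      intro ab hab
      obtain ⟨h1, h2⟩ := hmem ab hab
      have hr := remainder_diff_norm_le f hf hC2 hC3 (x ab.1) (x ab.2) (x' ab.1) (x' ab.2)
        hM0 (hMz _ h1) (hMz _ h2)
      rw [hT, hT']
      have hzz : (x ab.2 - x ab.1) - (x' ab.2 - x' ab.1) = z ab.2 - z ab.1 := by
        simp only [hzdef]; abel
      rw [← hzz]
      exact hr
    -- sums of p-th powers of increments over the partition
    have hdzs : ∑ ab ∈ P, ‖z ab.2 - z ab.1‖ ^ p ≤ Z := by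
      rw [hPdef, List.sum_toFinset _ hnd]
      exact partSum_le_pVarSum p (fun a b => z b - z a) hs
    have hdxs : ∑ ab ∈ P, ‖x ab.2 - x ab.1‖ ^ p ≤ X := by
      rw [hPdef, List.sum_toFinset _ hnd]
      exact partSum_le_pVarSum p (fun a b => x b - x a) hs
    have hdxs' : ∑ ab ∈ P, ‖x' ab.2 - x' ab.1‖ ^ p ≤ X' := by
      rw [hPdef, List.sum_toFinset _ hnd]
      exact partSum_le_pVarSum p (fun a b => x' b - x' a) hs
    have hsq : ∀ a : ℝ, 0 ≤ a → (a ^ (p/2)) ^ (2:ℕ) = a ^ p := by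
      intro a ha
      rw [← Real.rpow_natCast (a ^ (p/2)) 2, ← Real.rpow_mul ha]
      norm_num
    have hsq2 : ∀ a : ℝ, 0 ≤ a → (a ^ (2:ℕ)) ^ (p/2) = a ^ p := by
      intro a ha
      rw [← Real.rpow_natCast a 2, ← Real.rpow_mul ha]
      congr 1
      push_cast
      ring
    -- step 1 : pointwise rpow bound
    have step1 : ∀ ab ∈ P, ‖T ab.1 ab.2 - T' ab.1 ab.2‖ ^ (p/2)
        ≤ C ^ (p/2) / 2 * (((‖x ab.2 - x ab.1‖ + ‖x' ab.2 - x' ab.1‖) * ‖z ab.2 - z ab.1‖) ^ (p/2)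
          + (M * ‖x' ab.2 - x' ab.1‖ ^ 2) ^ (p/2)) := by
      intro ab hab
      have hA0 : (0:ℝ) ≤ (‖x ab.2 - x ab.1‖ + ‖x' ab.2 - x' ab.1‖) * ‖z ab.2 - z ab.1‖ := by
        positivity
      have hB0 : (0:ℝ) ≤ M * ‖x' ab.2 - x' ab.1‖ ^ 2 := mul_nonneg hM0 (sq_nonneg _)
      have h1 : ‖T ab.1 ab.2 - T' ab.1 ab.2‖ ^ (p/2)
          ≤ (C/2 * ((‖x ab.2 - x ab.1‖ + ‖x' ab.2 - x' ab.1‖) * ‖z ab.2 - z ab.1‖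
              + M * ‖x' ab.2 - x' ab.1‖ ^ 2)) ^ (p/2) :=
        Real.rpow_le_rpow (norm_nonneg _) (hpt ab hab) hq0.le
      refine h1.trans ?_
      rw [Real.mul_rpow (div_nonneg hC0 (by norm_num)) (add_nonneg hA0 hB0)]
      have h2 := rpow_add_le_two_rpow_mul hq1 hA0 hB0
      have h2q : (0:ℝ) < 2 ^ (p/2) := Real.rpow_pos_of_pos (by norm_num) _
      calc (C/2) ^ (p/2) * ((‖x ab.2 - x ab.1‖ + ‖x' ab.2 - x' ab.1‖) * ‖z ab.2 - z ab.1‖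
              + M * ‖x' ab.2 - x' ab.1‖ ^ 2) ^ (p/2)
          ≤ (C/2) ^ (p/2) * (2 ^ (p/2 - 1)
              * (((‖x ab.2 - x ab.1‖ + ‖x' ab.2 - x' ab.1‖) * ‖z ab.2 - z ab.1‖) ^ (p/2)
                + (M * ‖x' ab.2 - x' ab.1‖ ^ 2) ^ (p/2))) :=
            mul_le_mul_of_nonneg_left h2 (Real.rpow_nonneg (div_nonneg hC0 (by norm_num)) _)
        _ = C ^ (p/2) / 2 * (((‖x ab.2 - x ab.1‖ + ‖x' ab.2 - x' ab.1‖) * ‖z ab.2 - z ab.1‖) ^ (p/2)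
              + (M * ‖x' ab.2 - x' ab.1‖ ^ 2) ^ (p/2)) := by
            rw [Real.div_rpow hC0 (by norm_num), Real.rpow_sub (by norm_num : (0:ℝ) < 2),
              Real.rpow_one]
            field_simp
    -- bound for the "A" sum via Cauchy-Schwarz
    have hSA : ∑ ab ∈ P, ((‖x ab.2 - x ab.1‖ + ‖x' ab.2 - x' ab.1‖) * ‖z ab.2 - z ab.1‖) ^ (p/2)
        ≤ 2 ^ (p/2 - 1) * (2 * (Z ^ ((1:ℝ)/2) * (X + X') ^ ((1:ℝ)/2))) := by
      have perA : ∀ ab ∈ P,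
          ((‖x ab.2 - x ab.1‖ + ‖x' ab.2 - x' ab.1‖) * ‖z ab.2 - z ab.1‖) ^ (p/2)
          ≤ 2 ^ (p/2 - 1) * ((‖x ab.2 - x ab.1‖ ^ (p/2) + ‖x' ab.2 - x' ab.1‖ ^ (p/2))
              * ‖z ab.2 - z ab.1‖ ^ (p/2)) := by
        intro ab _
        rw [Real.mul_rpow (by positivity) (norm_nonneg _)]
        have := rpow_add_le_two_rpow_mul hq1 (norm_nonneg (x ab.2 - x ab.1))
          (norm_nonneg (x' ab.2 - x' ab.1))
        calc (‖x ab.2 - x ab.1‖ + ‖x' ab.2 - x' ab.1‖) ^ (p/2) * ‖z ab.2 - z ab.1‖ ^ (p/2)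
            ≤ (2 ^ (p/2 - 1) * (‖x ab.2 - x ab.1‖ ^ (p/2) + ‖x' ab.2 - x' ab.1‖ ^ (p/2)))
                * ‖z ab.2 - z ab.1‖ ^ (p/2) :=
              mul_le_mul_of_nonneg_right this (Real.rpow_nonneg (norm_nonneg _) _)
          _ = 2 ^ (p/2 - 1) * ((‖x ab.2 - x ab.1‖ ^ (p/2) + ‖x' ab.2 - x' ab.1‖ ^ (p/2))
                * ‖z ab.2 - z ab.1‖ ^ (p/2)) := by ring
      refine (Finset.sum_le_sum perA).trans ?_
      rw [← Finset.mul_sum]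
      apply mul_le_mul_of_nonneg_left _ (Real.rpow_nonneg (by norm_num) _)
      -- Cauchy-Schwarz part
      set G := ∑ ab ∈ P, (‖x ab.2 - x ab.1‖ ^ (p/2) + ‖x' ab.2 - x' ab.1‖ ^ (p/2))
          * ‖z ab.2 - z ab.1‖ ^ (p/2) with hGdef
      have hG0 : 0 ≤ G := by
        apply Finset.sum_nonneg
        intro ab _
        positivity
      have hCS := Finset.sum_mul_sq_le_sq_mul_sq P
        (fun ab => ‖x ab.2 - x ab.1‖ ^ (p/2) + ‖x' ab.2 - x' ab.1‖ ^ (p/2))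
        (fun ab => ‖z ab.2 - z ab.1‖ ^ (p/2))
      have hu2 : ∑ ab ∈ P, (‖x ab.2 - x ab.1‖ ^ (p/2) + ‖x' ab.2 - x' ab.1‖ ^ (p/2)) ^ (2:ℕ)
          ≤ 2 * (X + X') := by
        have per : ∀ ab ∈ P, (‖x ab.2 - x ab.1‖ ^ (p/2) + ‖x' ab.2 - x' ab.1‖ ^ (p/2)) ^ (2:ℕ)
            ≤ 2 * (‖x ab.2 - x ab.1‖ ^ p + ‖x' ab.2 - x' ab.1‖ ^ p) := by
          intro ab _
          rw [← hsq _ (norm_nonneg (x ab.2 - x ab.1)), ← hsq _ (norm_nonneg (x' ab.2 - x' ab.1))]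
          nlinarith [sq_nonneg (‖x ab.2 - x ab.1‖ ^ (p/2) - ‖x' ab.2 - x' ab.1‖ ^ (p/2))]
        refine (Finset.sum_le_sum per).trans ?_
        rw [← Finset.mul_sum, Finset.sum_add_distrib]
        have := add_le_add hdxs hdxs'
        nlinarith
      have hv2 : ∑ ab ∈ P, (‖z ab.2 - z ab.1‖ ^ (p/2)) ^ (2:ℕ) ≤ Z := by
        have : ∀ ab ∈ P, (‖z ab.2 - z ab.1‖ ^ (p/2)) ^ (2:ℕ) = ‖z ab.2 - z ab.1‖ ^ p :=
          fun ab _ => hsq _ (norm_nonneg _)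
        rw [Finset.sum_congr rfl this]
        exact hdzs
      have hG2 : G ^ (2:ℕ) ≤ 2 * (X + X') * Z := by
        refine hCS.trans ?_
        have h1 : (0:ℝ) ≤ ∑ ab ∈ P, (‖z ab.2 - z ab.1‖ ^ (p/2)) ^ (2:ℕ) :=
          Finset.sum_nonneg fun ab _ => by positivity
        have h2 : (0:ℝ) ≤ 2 * (X + X') := by linarith
        exact mul_le_mul hu2 hv2 h1 h2
      have hXZ0 : (0:ℝ) ≤ (X + X') * Z := mul_nonneg (by linarith) hZ0
      calc G = Real.sqrt (G ^ 2) := (Real.sqrt_sq hG0).symm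
        _ ≤ Real.sqrt (2 ^ (2:ℕ) * ((X + X') * Z)) := by
            apply Real.sqrt_le_sqrt
            nlinarith
        _ = 2 * Real.sqrt ((X + X') * Z) := by
            rw [Real.sqrt_mul (by norm_num : (0:ℝ) ≤ (2:ℝ)^(2:ℕ)), Real.sqrt_sq (by norm_num : (0:ℝ) ≤ 2)]
        _ = 2 * (Real.sqrt (X + X') * Real.sqrt Z) := by
            rw [Real.sqrt_mul (by linarith)]
        _ = 2 * (Z ^ ((1:ℝ)/2) * (X + X') ^ ((1:ℝ)/2)) := by
            rw [Real.sqrt_eq_rpow, Real.sqrt_eq_rpow]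
            ring
    -- bound for the "B" sum
    have hSB : ∑ ab ∈ P, (M * ‖x' ab.2 - x' ab.1‖ ^ 2) ^ (p/2) ≤ M ^ (p/2) * X' := by
      have per : ∀ ab ∈ P, (M * ‖x' ab.2 - x' ab.1‖ ^ 2) ^ (p/2)
          = M ^ (p/2) * ‖x' ab.2 - x' ab.1‖ ^ p := by
        intro ab _
        rw [Real.mul_rpow hM0 (sq_nonneg _), hsq2 _ (norm_nonneg _)]
      rw [Finset.sum_congr rfl per, ← Finset.mul_sum]
      exact mul_le_mul_of_nonneg_left hdxs' (Real.rpow_nonneg hM0 _)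
    -- put everything together
    have hstep1sum : ∑ ab ∈ P, ‖T ab.1 ab.2 - T' ab.1 ab.2‖ ^ (p/2)
        ≤ C ^ (p/2) / 2
          * ((∑ ab ∈ P, ((‖x ab.2 - x ab.1‖ + ‖x' ab.2 - x' ab.1‖) * ‖z ab.2 - z ab.1‖) ^ (p/2))
            + ∑ ab ∈ P, (M * ‖x' ab.2 - x' ab.1‖ ^ 2) ^ (p/2)) := by
      refine (Finset.sum_le_sum step1).trans ?_
      rw [← Finset.mul_sum, Finset.sum_add_distrib]
    refine hstep1sum.trans ?_
    have h2pow1 : (1:ℝ) ≤ 2 ^ (p/2 - 1) := by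
      have := Real.rpow_le_rpow_of_exponent_le (by norm_num : (1:ℝ) ≤ 2)
        (by linarith : (0:ℝ) ≤ p/2 - 1)
      rwa [Real.rpow_zero] at this
    have hCq0 : (0:ℝ) ≤ C ^ (p/2) := Real.rpow_nonneg hC0 _
    have hMX'0 : (0:ℝ) ≤ M ^ (p/2) * X' := mul_nonneg (Real.rpow_nonneg hM0 _) hX'0
    have hSA0 : (0:ℝ) ≤ ∑ ab ∈ P,
        ((‖x ab.2 - x ab.1‖ + ‖x' ab.2 - x' ab.1‖) * ‖z ab.2 - z ab.1‖) ^ (p/2) :=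
      Finset.sum_nonneg fun ab _ => Real.rpow_nonneg (by positivity) _
    have hSB0 : (0:ℝ) ≤ ∑ ab ∈ P, (M * ‖x' ab.2 - x' ab.1‖ ^ 2) ^ (p/2) :=
      Finset.sum_nonneg fun ab _ => Real.rpow_nonneg (mul_nonneg hM0 (sq_nonneg _)) _
    rw [hBrdef]
    nlinarith [mul_le_mul_of_nonneg_left hSA (div_nonneg hCq0 (by norm_num) : (0:ℝ) ≤ C ^ (p/2) / 2),
      mul_le_mul_of_nonneg_left hSB (div_nonneg hCq0 (by norm_num) : (0:ℝ) ≤ C ^ (p/2) / 2),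
      mul_nonneg hCq0 hT1nn, mul_nonneg hCq0 hMX'0,
      mul_le_mul_of_nonneg_right h2pow1 (mul_nonneg hCq0 hMX'0),
      mul_le_mul_of_nonneg_right h2pow1 (mul_nonneg hCq0 hT1nn)]
  have hS0 : 0 ≤ pVarSum (p/2) (fun a b => T a b - T' a b) k l := pVarSum_nonneg _ _ _ _
  rw [one_div_div]
  calc pVarSum (p/2) (fun a b => T a b - T' a b) k l ^ (2/p)
      ≤ (2 ^ (p/2 - 1) * C ^ (p/2) * Br) ^ (2/p) :=
        Real.rpow_le_rpow hS0 hS (div_nonneg (by norm_num) hp0.le)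
    _ = 2 ^ ((p-2)/p) * C * Br ^ (2/p) := by
        have h2nn : (0:ℝ) ≤ 2 ^ (p/2 - 1) := Real.rpow_nonneg (by norm_num) _
        have hCnn : (0:ℝ) ≤ C ^ (p/2) := Real.rpow_nonneg hC0 _
        rw [Real.mul_rpow (mul_nonneg h2nn hCnn) hBr0, Real.mul_rpow h2nn hCnn,
          ← Real.rpow_mul (by norm_num : (0:ℝ) ≤ 2), ← Real.rpow_mul hC0]
        have e1 : (p/2 - 1) * (2/p) = (p-2)/p := by field_simp; try ring
        have e2 : (p/2) * (2/p) = 1 := by field_simp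
        rw [e1, e2, Real.rpow_one]
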